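/- arXiv:0911.2674 — 6 statements merged into one kernel-verified Lean document; each statement's English description precedes it below -/
import Mathlib

section
/- For every positive integer n and every n×n matrix A of natural numbers there exists a canon for A; that is, there exist a function λ : Fin n → ℕ and a permutation σ of Fin n such that for every row i and every column j one has A(i,j) + λ(i) ≤ A(σ(j),j) + λ(σ(j)) (so the entries in positions (σ(j),j) are maximal in their respective columns of the matrix (A(i,j)+λ(i)) and lie in pairwise distinct rows). -/
section CanonAux

variable {α : Type*} [DecidableEq α]

/-- Weight of a walk starting at `u` through the vertices of `l`. -/
def Wt (w : α → α → ℤ) : α → List α → ℤ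
  | _, [] => 0
  | u, v :: t => w u v + Wt w v t

lemma Wt_append (w : α → α → ℤ) (x : α) (l2 : List α) :
    ∀ (l1 : List α) (u : α), Wt w u (l1 ++ x :: l2) = Wt w u (l1 ++ [x]) + Wt w x l2 := by
  intro l1
  induction l1 with
  | nil => intro u; simp [Wt]
  | cons a t ih =>
    intro u
    simp only [List.cons_append]
    show w u a + Wt w a (t ++ x :: l2) = w u a + Wt w a (t ++ [x]) + Wt w x l2
    rw [ih]; ring

/-- Any list with a duplicate contains a "cycle pattern". -/
lemma dup_pattern : ∀ (L : List α), ¬ L.Nodup →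
    ∃ pre x mid post, L = pre ++ x :: (mid ++ x :: post) ∧ (x :: mid).Nodup := by
  intro L
  induction L with
  | nil => intro h; exact absurd List.nodup_nil h
  | cons a t ih =>
    intro h
    by_cases ht : t.Nodup
    · have ha : a ∈ t := by
        by_contra hna
        exact h (List.nodup_cons.mpr ⟨hna, ht⟩)
      obtain ⟨s, t', rfl⟩ := List.append_of_mem ha
      rw [List.nodup_append] at ht
      refine ⟨[], a, s, t', by simp, List.nodup_cons.mpr ⟨?_, ht.1⟩⟩
      intro has
      exact ht.2.2 a has a (by simp) rfl
    · obtain ⟨pre, x, mid, post, heq, hnd⟩ := ih ht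
      exact ⟨a :: pre, x, mid, post, by rw [List.cons_append, heq], hnd⟩

/-- Any walk can be replaced by a no-duplicate walk of no larger weight,
assuming all (simple) cycles have nonnegative weight. -/
lemma shorten_aux (w : α → α → ℤ)
    (hcyc : ∀ (x : α) (mid : List α), (x :: mid).Nodup → 0 ≤ Wt w x (mid ++ [x])) :
    ∀ (k : ℕ) (l : List α) (u : α), l.length ≤ k →
      ∃ l', (u :: l').Nodup ∧ Wt w u l' ≤ Wt w u l := by
  intro k
  induction k with
  | zero =>
    intro l u hl
    rw [List.length_eq_zero_iff.mp (Nat.le_zero.mp hl)]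
    exact ⟨[], List.nodup_singleton u, le_rfl⟩
  | succ k ih =>
    intro l u hl
    by_cases hnd : (u :: l).Nodup
    · exact ⟨l, hnd, le_rfl⟩
    · obtain ⟨pre, x, mid, post, heq, hmid⟩ := dup_pattern (u :: l) hnd
      cases pre with
      | nil =>
        simp only [List.nil_append, List.cons.injEq] at heq
        obtain ⟨rfl, rfl⟩ := heq
        have hlen : post.length ≤ k := by
          have := hl; simp at this; omega
        obtain ⟨l', hnd', hle'⟩ := ih post u hlen
        refine ⟨l', hnd', hle'.trans ?_⟩
        rw [Wt_append w u post mid u]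
        have := hcyc u mid hmid
        linarith
      | cons y pre' =>
        simp only [List.cons_append, List.cons.injEq] at heq
        obtain ⟨rfl, rfl⟩ := heq
        have hlen : (pre' ++ x :: post).length ≤ k := by
          have := hl; simp at this ⊢; omega
        obtain ⟨l', hnd', hle'⟩ := ih (pre' ++ x :: post) u hlen
        refine ⟨l', hnd', hle'.trans ?_⟩
        rw [Wt_append w x post pre' u, Wt_append w x (mid ++ x :: post) pre' u,
          Wt_append w x post mid x]
        have := hcyc x mid hmid
        linarith

/-- `formPerm` rotates the list. -/
lemma map_formPerm : ∀ (mid : List α) (x : α), (x :: mid).Nodup →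
    (x :: mid).map ((x :: mid).formPerm) = mid ++ [x] := by
  intro mid
  induction mid with
  | nil => intro x _; simp [List.formPerm_singleton]
  | cons y t ih =>
    intro x hnd
    have hxy : x ∉ y :: t := (List.nodup_cons.mp hnd).1
    have hyt : (y :: t).Nodup := (List.nodup_cons.mp hnd).2
    have hIH := ih y hyt
    have h1 : (Equiv.swap x y * (y :: t).formPerm) x = y := by
      rw [Equiv.Perm.mul_apply, List.formPerm_apply_of_notMem hxy, Equiv.swap_apply_left]
    have h2 : (y :: t).map (Equiv.swap x y * (y :: t).formPerm)
        = ((y :: t).map ((y :: t).formPerm)).map (Equiv.swap x y) := by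
      rw [List.map_map]; rfl
    have hxt : x ∉ t := fun hxt => hxy (List.mem_cons_of_mem y hxt)
    have hyT : y ∉ t := (List.nodup_cons.mp hyt).1
    have h3 : t.map (Equiv.swap x y) = t := by
      apply List.map_congr_left ?_ |>.trans (List.map_id t)
      intro z hz
      exact Equiv.swap_apply_of_ne_of_ne (fun h => hxt (h ▸ hz)) (fun h => hyT (h ▸ hz))
    rw [List.formPerm_cons_cons, List.map_cons, h1, h2, hIH, List.map_append, h3]
    simp [Equiv.swap_apply_right]

/-- Walk weight of a cycle as a sum over the list. -/
lemma Wt_of_map (w : α → α → ℤ) (g : α → α) :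
    ∀ (mid : List α) (x z : α), (x :: mid).map g = mid ++ [z] →
      Wt w x (mid ++ [z]) = ((x :: mid).map (fun u => w u (g u))).sum := by
  intro mid
  induction mid with
  | nil =>
    intro x z h
    simp only [List.map_cons, List.map_nil, List.nil_append, List.cons.injEq] at h
    simp [Wt, h.1]
  | cons y t ih =>
    intro x z h
    simp only [List.map_cons, List.cons_append, List.cons.injEq] at h
    obtain ⟨rfl, h2⟩ := h
    have hih := ih (g x) z (by rw [List.map_cons]; exact h2)
    simp only [List.cons_append]
    show w x (g x) + Wt w (g x) (t ++ [z])
      = ((x :: g x :: t).map (fun u => w u (g u))).sum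
    rw [hih]
    simp

end CanonAux

/-- Bellman–Ford style iteration for shortest walk weights. -/
def gBF {n : ℕ} (hne : (Finset.univ : Finset (Fin n)).Nonempty)
    (w : Fin n → Fin n → ℤ) : ℕ → Fin n → ℤ
  | 0 => fun _ => 0
  | k + 1 => fun u =>
      min (gBF hne w k u) (Finset.univ.inf' hne fun v => w u v + gBF hne w k v)

lemma gBF_le_Wt {n : ℕ} (hne : (Finset.univ : Finset (Fin n)).Nonempty)
    (w : Fin n → Fin n → ℤ) :
    ∀ (k : ℕ) (l : List (Fin n)) (u : Fin n), l.length ≤ k →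
      gBF hne w k u ≤ Wt w u l := by
  have hnonpos : ∀ k u, gBF hne w k u ≤ 0 := by
    intro k
    induction k with
    | zero => intro u; exact le_rfl
    | succ k ih => intro u; exact (min_le_left _ _).trans (ih u)
  intro k
  induction k with
  | zero =>
    intro l u hl
    rw [List.length_eq_zero_iff.mp (Nat.le_zero.mp hl)]
    exact le_rfl
  | succ k ih =>
    intro l u hl
    cases l with
    | nil => exact hnonpos (k + 1) u
    | cons v t =>
      have : gBF hne w (k + 1) u ≤ w u v + gBF hne w k v :=
        (min_le_right _ _).trans (Finset.inf'_le _ (Finset.mem_univ v))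
      refine this.trans ?_
      have ht : t.length ≤ k := by simp at hl; omega
      exact add_le_add_right (ih t v ht) _

lemma gBF_exists {n : ℕ} (hne : (Finset.univ : Finset (Fin n)).Nonempty)
    (w : Fin n → Fin n → ℤ) :
    ∀ (k : ℕ) (u : Fin n), ∃ l : List (Fin n), gBF hne w k u = Wt w u l := by
  intro k
  induction k with
  | zero => intro u; exact ⟨[], rfl⟩
  | succ k ih =>
    intro u
    obtain ⟨v, -, hv⟩ := Finset.exists_mem_eq_inf' hne (fun v => w u v + gBF hne w k v)
    rcases min_cases (gBF hne w k u) (Finset.univ.inf' hne fun v => w u v + gBF hne w k v)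
      with ⟨h, -⟩ | ⟨h, -⟩
    · obtain ⟨l, hl⟩ := ih u
      exact ⟨l, by simp only [gBF]; rw [h, hl]⟩
    · obtain ⟨l, hl⟩ := ih v
      exact ⟨v :: l, by simp only [gBF]; rw [h, hv, hl]; rfl⟩

/-- For every positive integer `n` and every `n × n` matrix `A` of natural
numbers there exists a canon for `A`: a function `lam : Fin n → ℕ` and a permutation `σ`
of `Fin n` such that for all `i j`, `A i j + lam i ≤ A (σ j) j + lam (σ j)`. -/
theorem exists_canon (n : ℕ) (hn : 0 < n) (A : Matrix (Fin n) (Fin n) ℕ) :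
    ∃ (lam : Fin n → ℕ) (σ : Equiv.Perm (Fin n)),
      ∀ i j : Fin n, A i j + lam i ≤ A (σ j) j + lam (σ j) := by
  haveI : NeZero n := ⟨hn.ne'⟩
  have hne : (Finset.univ : Finset (Fin n)).Nonempty := ⟨⟨0, hn⟩, Finset.mem_univ _⟩
  -- choose a maximizing permutation
  obtain ⟨σ, -, hσ⟩ := Finset.exists_max_image (Finset.univ : Finset (Equiv.Perm (Fin n)))
    (fun π => ∑ j, A (π j) j) ⟨1, Finset.mem_univ _⟩
  have hσ' : ∀ π : Equiv.Perm (Fin n), ∑ j, A (π j) j ≤ ∑ j, A (σ j) j :=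
    fun π => hσ π (Finset.mem_univ π)
  -- reduced costs
  set w : Fin n → Fin n → ℤ :=
    fun u v => (A u (σ.symm u) : ℤ) - (A v (σ.symm u) : ℤ) with hw
  -- all simple cycles have nonnegative weight
  have hcyc : ∀ (x : Fin n) (mid : List (Fin n)), (x :: mid).Nodup →
      0 ≤ Wt w x (mid ++ [x]) := by
    intro x mid hnd
    set c := x :: mid with hc
    set τ := c.formPerm with hτ
    have hmap : c.map τ = mid ++ [x] := map_formPerm mid x hnd
    have h1 : Wt w x (mid ++ [x]) = (c.map (fun u => w u (τ u))).sum :=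
      Wt_of_map w τ mid x x hmap
    have h2 : (c.map (fun u => w u (τ u))).sum = ∑ u ∈ c.toFinset, w u (τ u) :=
      (List.sum_toFinset _ hnd).symm
    have h3 : ∑ u ∈ c.toFinset, w u (τ u) = ∑ u : Fin n, w u (τ u) := by
      apply Finset.sum_subset (Finset.subset_univ _)
      intro u _ hu
      have hnotmem : u ∉ c := fun h => hu (List.mem_toFinset.mpr h)
      rw [hτ, List.formPerm_apply_of_notMem hnotmem, hw]
      simp
    have e1 : ∑ j, A (σ j) j = ∑ u, A u (σ.symm u) :=
      Fintype.sum_bijective σ σ.bijective _ _ (fun j => by simp)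
    have e2 : ∑ j, A ((σ.trans τ) j) j = ∑ u, A (τ u) (σ.symm u) :=
      Fintype.sum_bijective σ σ.bijective _ _ (fun j => by simp [Equiv.trans_apply])
    have h4 : 0 ≤ ∑ u : Fin n, w u (τ u) := by
      have hsum : ∑ u : Fin n, w u (τ u)
          = (∑ u, A u (σ.symm u) : ℕ) - ((∑ u, A (τ u) (σ.symm u) : ℕ) : ℤ) := by
        rw [hw]
        push_cast
        rw [Finset.sum_sub_distrib]
      rw [hsum, ← e1, ← e2, sub_nonneg, Nat.cast_le]
      exact hσ' (σ.trans τ)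
    rw [h1, h2, h3]
    exact h4
  -- the potential: shortest walk weights after n iterations
  set g : Fin n → ℤ := gBF hne w n with hg
  have hkey : ∀ u v : Fin n, g u ≤ w u v + g v := by
    intro u v
    obtain ⟨l, hl⟩ := gBF_exists hne w n v
    obtain ⟨l', hnd', hle'⟩ := shorten_aux w hcyc l.length l v le_rfl
    have hlen : (v :: l').length ≤ n := by
      have := hnd'.length_le_card
      simpa using this
    have h5 : g u ≤ Wt w u (v :: l') := gBF_le_Wt hne w n (v :: l') u hlen
    have h6 : Wt w u (v :: l') = w u v + Wt w v l' := rfl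
    have h7 : Wt w v l' ≤ g v := by rw [hg, hl]; exact hle'
    linarith
  have hgle : ∀ u, g u ≤ 0 := by
    intro u
    have := gBF_le_Wt hne w n [] u (by simp)
    simpa [Wt] using this
  refine ⟨fun i => (-g i).toNat, σ, ?_⟩
  intro i j
  have e1 : ((-g i).toNat : ℤ) = -g i := Int.toNat_of_nonneg (by linarith [hgle i])
  have e2 : ((-g (σ j)).toNat : ℤ) = -g (σ j) := Int.toNat_of_nonneg (by linarith [hgle (σ j)])
  have hk := hkey (σ j) i
  rw [hw] at hk
  simp only [Equiv.symm_apply_apply] at hk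
  have : (A i j : ℤ) + (-g i) ≤ (A (σ j) j : ℤ) + (-g (σ j)) := by linarith
  zify
  rw [e1, e2]
  exact this
end

section
/- Let A be an n×n matrix of natural numbers (n ≥ 1) and let (λ,σ) be a canon for A, i.e. λ : Fin n → ℕ and σ a permutation of Fin n satisfy A(i,j) + λ(i) ≤ A(σ(j),j) + λ(σ(j)) for all i,j. Then the transversal sum determined by σ is maximal: Σ_j A(σ(j),j) = J(A), i.e. Σ_j A(σ(j),j) ≥ Σ_j A(τ(j),j) for every permutation τ of Fin n. -/
/-- The Jacobi number of a square matrix of naturals: the maximum of the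
transversal sums `∑ j, A (τ j) j` over all permutations `τ`. -/
def jacobiNumber {n : ℕ} (A : Matrix (Fin n) (Fin n) ℕ) : ℕ :=
  Finset.univ.sup fun τ : Equiv.Perm (Fin n) => ∑ j, A (τ j) j

/-- if `(lam, σ)` is a canon for `A`, then the transversal sum
determined by `σ` is maximal, i.e. equals the Jacobi number of `A`. -/
theorem canon_transversal_sum_eq_jacobiNumber (n : ℕ) (hn : 1 ≤ n)
    (A : Matrix (Fin n) (Fin n) ℕ) (lam : Fin n → ℕ) (σ : Equiv.Perm (Fin n))
    (hcanon : ∀ i j : Fin n, A i j + lam i ≤ A (σ j) j + lam (σ j)) :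
    (∑ j, A (σ j) j) = jacobiNumber A ∧
      ∀ τ : Equiv.Perm (Fin n), (∑ j, A (τ j) j) ≤ ∑ j, A (σ j) j := by
  have hmax : ∀ τ : Equiv.Perm (Fin n), (∑ j, A (τ j) j) ≤ ∑ j, A (σ j) j := by
    intro τ
    have h1 : (∑ j, A (τ j) j) + ∑ j, lam (τ j) ≤
        (∑ j, A (σ j) j) + ∑ j, lam (σ j) := by
      rw [← Finset.sum_add_distrib, ← Finset.sum_add_distrib]
      exact Finset.sum_le_sum fun j _ => hcanon (τ j) j
    have h2 : (∑ j, lam (τ j)) = ∑ j, lam (σ j) := by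
      rw [Equiv.sum_comp τ lam, Equiv.sum_comp σ lam]
    omega
  refine ⟨le_antisymm ?_ ?_, hmax⟩
  · exact Finset.le_sup (f := fun τ : Equiv.Perm (Fin n) => ∑ j, A (τ j) j) (Finset.mem_univ σ)
  · exact Finset.sup_le fun τ _ => hmax τ
end

section
/- For every n×n matrix A of natural numbers (n ≥ 1) there exists a canon ℓ : Fin n → ℕ for A that is pointwise minimal among all canons: for every canon λ for A and every index i, one has ℓ(i) ≤ λ(i). In particular, such a pointwise minimal canon is unique. -/
/-- `lam` is a canon for `A` if there is a permutation `σ` such that for all `i j`,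
`A i j + lam i ≤ A (σ j) j + lam (σ j)`. -/
def IsCanon {n : ℕ} (A : Matrix (Fin n) (Fin n) ℕ) (lam : Fin n → ℕ) : Prop :=
  ∃ σ : Equiv.Perm (Fin n), ∀ i j : Fin n, A i j + lam i ≤ A (σ j) j + lam (σ j)

namespace JacobiAux

variable {V : Type*}

/-- weight of a walk given as a list of vertices -/
def wsum (w : V → V → ℤ) : List V → ℤ
  | [] => 0
  | [_] => 0
  | a :: b :: l => w a b + wsum w (b :: l)

lemma wsum_nil (w : V → V → ℤ) : wsum w [] = 0 := rfl

lemma wsum_single (w : V → V → ℤ) (a : V) : wsum w [a] = 0 := rfl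

lemma wsum_cons (w : V → V → ℤ) (a b : V) (l : List V) :
    wsum w (a :: b :: l) = w a b + wsum w (b :: l) := rfl

lemma wsum_append (w : V → V → ℤ) : ∀ (l₁ : List V) (x : V) (l₂ : List V),
    wsum w (l₁ ++ x :: l₂) = wsum w (l₁ ++ [x]) + wsum w (x :: l₂)
  | [], x, l₂ => by simp [wsum_single]
  | [a], x, l₂ => by simp [wsum_cons, wsum_single]
  | a :: b :: l₁, x, l₂ => by
      have := wsum_append w (b :: l₁) x l₂
      simp only [List.cons_append] at this ⊢
      rw [wsum_cons, wsum_cons, this]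
      ring

lemma map_sum_range (f : V → ℤ) (d : V) : ∀ l : List V,
    (l.map f).sum = ∑ i ∈ Finset.range l.length, f (l.getD i d)
  | [] => by simp
  | a :: t => by
      rw [List.map_cons, List.sum_cons, map_sum_range f d t, List.length_cons,
        Finset.sum_range_succ']
      simp only [List.getD_cons_succ, List.getD_cons_zero]
      ring

lemma wsum_range (w : V → V → ℤ) (d : V) : ∀ l : List V,
    wsum w l = ∑ i ∈ Finset.range (l.length - 1), w (l.getD i d) (l.getD (i + 1) d)
  | [] => by simp [wsum_nil]
  | [a] => by simp [wsum_single]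
  | a :: b :: t => by
      rw [wsum_cons, wsum_range w d (b :: t)]
      have h : (a :: b :: t).length - 1 = ((b :: t).length - 1) + 1 := by simp
      rw [h, Finset.sum_range_succ']
      simp only [List.getD_cons_succ, List.getD_cons_zero]
      ring

lemma split_dup [DecidableEq V] : ∀ (l : List V), ¬ l.Nodup →
    ∃ (l₁ : List V) (x : V) (l₂ l₃ : List V),
      l = l₁ ++ x :: (l₂ ++ x :: l₃) ∧ (x :: l₂).Nodup
  | [], h => absurd List.nodup_nil h
  | a :: t, h => by
      by_cases ht : t.Nodup
      · have ha : a ∈ t := by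
          by_contra ha
          exact h (List.nodup_cons.mpr ⟨ha, ht⟩)
        obtain ⟨s, u, rfl⟩ := List.append_of_mem ha
        refine ⟨[], a, s, u, by simp, List.nodup_cons.mpr ⟨?_, ht.of_append_left⟩⟩
        intro hmem
        exact (List.disjoint_of_nodup_append ht) hmem List.mem_cons_self
      · obtain ⟨l₁, x, l₂, l₃, heq, hnd⟩ := split_dup t ht
        exact ⟨a :: l₁, x, l₂, l₃, by rw [heq, List.cons_append], hnd⟩

variable [Fintype V] [DecidableEq V]

lemma cycle_nonpos (w : V → V → ℤ) (hww : ∀ v, w v v = 0)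
    (hperm : ∀ c : Equiv.Perm V, ∑ v, w v (c v) ≤ 0)
    (x : V) (t : List V) (h : (x :: t).Nodup) :
    wsum w ((x :: t) ++ [x]) ≤ 0 := by
  set l := x :: t with hl
  have hlpos : 0 < l.length := by simp [hl]
  have hx0 : l.getD 0 x = x := rfl
  have h1 : wsum w (l ++ [x]) =
      ∑ i ∈ Finset.range l.length, w (l.getD i x) (l.getD ((i + 1) % l.length) x) := by
    rw [wsum_range w x (l ++ [x])]
    have hlen2 : (l ++ [x]).length - 1 = l.length := by simp
    rw [hlen2]
    refine Finset.sum_congr rfl fun i hi => ?_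
    have hi' : i < l.length := Finset.mem_range.mp hi
    have e1 : (l ++ [x]).getD i x = l.getD i x := List.getD_append l [x] x i hi'
    rcases eq_or_lt_of_le (Nat.succ_le_of_lt hi') with heq | hlt
    · have hlen : i + 1 = l.length := heq
      have e2 : (l ++ [x]).getD (i + 1) x = x := by
        rw [hlen, List.getD_append_right l [x] x l.length le_rfl]
        simp
      rw [e1, e2, hlen, Nat.mod_self, hx0]
    · have e3 : (l ++ [x]).getD (i + 1) x = l.getD (i + 1) x :=
        List.getD_append l [x] x (i + 1) hlt
      rw [e1, e3, Nat.mod_eq_of_lt hlt]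
  have h2 : ∀ i ∈ Finset.range l.length,
      w (l.getD i x) (l.getD ((i + 1) % l.length) x)
        = w (l.getD i x) (l.formPerm (l.getD i x)) := by
    intro i hi
    have hi' : i < l.length := Finset.mem_range.mp hi
    have hmod : (i + 1) % l.length < l.length := Nat.mod_lt _ hlpos
    rw [List.getD_eq_getElem l x hi', List.getD_eq_getElem l x hmod,
      List.formPerm_apply_getElem l h i hi']
  calc wsum w (l ++ [x])
      = ∑ i ∈ Finset.range l.length, w (l.getD i x) (l.formPerm (l.getD i x)) := by
        rw [h1]; exact Finset.sum_congr rfl h2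
    _ = (l.map (fun v => w v (l.formPerm v))).sum := by
        rw [map_sum_range (fun v => w v (l.formPerm v)) x l]
    _ = ∑ v ∈ l.toFinset, w v (l.formPerm v) := (List.sum_toFinset _ h).symm
    _ = ∑ v, w v (l.formPerm v) := by
        refine Finset.sum_subset (Finset.subset_univ _) fun v _ hv => ?_
        rw [List.formPerm_apply_of_notMem (by simpa using hv), hww]
    _ ≤ 0 := hperm _

lemma exists_potential [Nonempty V] (w : V → V → ℤ)
    (hww : ∀ v, w v v = 0) (hperm : ∀ c : Equiv.Perm V, ∑ v, w v (c v) ≤ 0) :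
    ∃ p : V → ℤ, ∀ a b, p a + w a b ≤ p b := by
  classical
  set N := Fintype.card V with hN
  have hN1 : 1 ≤ N := Fintype.card_pos
  set p : V → ℤ := fun b =>
    (Finset.univ : Finset (Fin N → V)).sup' Finset.univ_nonempty
      (fun f : Fin N → V => wsum w (List.ofFn f ++ [b])) with hp
  have pad : ∀ (k : ℕ) (x : V) (t : List V),
      wsum w (List.replicate k x ++ x :: t) = wsum w (x :: t) := by
    intro k
    induction k with
    | zero => intro x t; simp
    | succ k ih =>
      intro x t
      have e : List.replicate (k + 1) x ++ x :: t
          = x :: (List.replicate k x ++ x :: t) := by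
        simp [List.replicate_succ]
      have e2 : List.replicate k x ++ x :: t
          = x :: (List.replicate k x ++ x :: t).tail := by
        cases k <;> simp [List.replicate_succ]
      rw [e, e2, wsum_cons, hww, zero_add, ← e2, ih]
  have offn : ∀ l : List V, l.length = N → ∃ f : Fin N → V, List.ofFn f = l := by
    intro l hl
    refine ⟨fun i => l.get (Fin.cast hl.symm i), ?_⟩
    apply List.ext_getElem (by simp [hl])
    intro i h1 h2
    simp
  have short : ∀ (l : List V) (b : V), l.length = N → wsum w (l ++ [b]) ≤ p b := by
    intro l b hl
    obtain ⟨f, rfl⟩ := offn l hl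
    exact Finset.le_sup' (fun f : Fin N → V => wsum w (List.ofFn f ++ [b])) (Finset.mem_univ f)
  have base0 : ∀ b : V, wsum w ([b] : List V) ≤ p b := by
    intro b
    have h1 : wsum w (List.replicate N b ++ [b]) = wsum w [b] := pad N b []
    have h2 : (List.replicate N b).length = N := by simp
    rw [← h1]
    exact short _ b h2
  have main : ∀ (k : ℕ) (l : List V), l.length ≤ k → ∀ b, wsum w (l ++ [b]) ≤ p b := by
    intro k
    induction k with
    | zero =>
      intro l hl b
      have : l = [] := List.length_eq_zero_iff.mp (Nat.le_zero.mp hl)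
      subst this
      simpa using base0 b
    | succ k ih =>
      intro l hl b
      by_cases hsmall : l.length ≤ N
      · cases l with
        | nil => simpa using base0 b
        | cons a t =>
          set m := N - (a :: t).length with hm
          have e1 : (List.replicate m a ++ (a :: t)) ++ [b]
              = List.replicate m a ++ (a :: (t ++ [b])) := by simp
          have e2 : wsum w ((List.replicate m a ++ (a :: t)) ++ [b])
              = wsum w ((a :: t) ++ [b]) := by
            rw [e1, pad m a (t ++ [b])]
            simp
          have hlen : (List.replicate m a ++ (a :: t)).length = N := by
            simp only [List.length_append, List.length_replicate, hm]
            simp at hsmall ⊢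
            omega
          rw [← e2]
          exact short _ b hlen
      · push_neg at hsmall
        have hnd : ¬ l.Nodup := by
          intro hnd
          exact absurd hnd.length_le_card (by omega)
        obtain ⟨l₁, x, l₂, l₃, rfl, hxl₂⟩ := split_dup l hnd
        have hlen3 : (l₁ ++ x :: l₃).length ≤ k := by
          simp only [List.length_append, List.length_cons] at hl ⊢
          omega
        have hcyc := cycle_nonpos w hww hperm x l₂ hxl₂
        have e1 : (l₁ ++ x :: (l₂ ++ x :: l₃)) ++ [b]
            = l₁ ++ x :: (l₂ ++ x :: (l₃ ++ [b])) := by simp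
        have e2 : wsum w (l₁ ++ x :: (l₂ ++ x :: (l₃ ++ [b])))
            = wsum w (l₁ ++ [x]) + wsum w (x :: (l₂ ++ x :: (l₃ ++ [b]))) :=
          wsum_append w l₁ x _
        have e3 : wsum w (x :: (l₂ ++ x :: (l₃ ++ [b])))
            = wsum w ((x :: l₂) ++ [x]) + wsum w (x :: (l₃ ++ [b])) := by
          have h4 := wsum_append w (x :: l₂) x (l₃ ++ [b])
          simpa using h4
        have e4 : wsum w ((l₁ ++ x :: l₃) ++ [b])
            = wsum w (l₁ ++ [x]) + wsum w (x :: (l₃ ++ [b])) := by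
          have h5 := wsum_append w l₁ x (l₃ ++ [b])
          simpa using h5
        have hih := ih (l₁ ++ x :: l₃) hlen3 b
        rw [e4] at hih
        rw [e1, e2, e3]
        linarith
  refine ⟨p, fun a b => ?_⟩
  obtain ⟨f, -, hfa⟩ := Finset.exists_mem_eq_sup' (Finset.univ_nonempty)
    (fun f : Fin N → V => wsum w (List.ofFn f ++ [a]))
  have h5 : wsum w ((List.ofFn f ++ [a]) ++ [b])
      = wsum w (List.ofFn f ++ [a]) + w a b := by
    have h6 := wsum_append w (List.ofFn f) a [b]
    have : wsum w (a :: [b]) = w a b := by simp [wsum_cons, wsum_single]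
    rw [this] at h6
    simpa using h6
  have h7 := main ((List.ofFn f ++ [a]).length) (List.ofFn f ++ [a]) le_rfl b
  have hpa : p a = wsum w (List.ofFn f ++ [a]) := hfa
  rw [h5] at h7
  rw [hpa]
  linarith

end JacobiAux

/-- every square matrix of naturals (with `n ≥ 1`) admits a pointwise
minimal canon; in particular such a canon is unique. -/
theorem exists_minimal_canon (n : ℕ) (hn : 1 ≤ n) (A : Matrix (Fin n) (Fin n) ℕ) :
    ∃ ℓ : Fin n → ℕ, IsCanon A ℓ ∧
      ∀ lam : Fin n → ℕ, IsCanon A lam → ∀ i : Fin n, ℓ i ≤ lam i := by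
  classical
  haveI : NeZero n := ⟨by omega⟩
  obtain ⟨π, -, hπ⟩ := Finset.exists_max_image (Finset.univ : Finset (Equiv.Perm (Fin n)))
    (fun σ => ∑ j, A (σ j) j) Finset.univ_nonempty
  have hπ' : ∀ σ : Equiv.Perm (Fin n), ∑ j, A (σ j) j ≤ ∑ j, A (π j) j :=
    fun σ => hπ σ (Finset.mem_univ σ)
  set w : Fin n → Fin n → ℤ := fun a b => (A (π a) b : ℤ) - (A (π b) b : ℤ) with hw
  have hww : ∀ v, w v v = 0 := by intro v; simp [hw]
  have hperm : ∀ c : Equiv.Perm (Fin n), ∑ v, w v (c v) ≤ 0 := by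
    intro c
    have e1 : ∑ v, (A (π (c.symm v)) v : ℤ) = ∑ v, (A (π v) (c v) : ℤ) := by
      rw [← Equiv.sum_comp c (fun v => (A (π (c.symm v)) v : ℤ))]
      simp
    have e2 : ∑ v, (A (π (c v)) (c v) : ℤ) = ∑ v, (A (π v) v : ℤ) :=
      Equiv.sum_comp c (fun v => (A (π v) v : ℤ))
    have e3 := hπ' (c.symm.trans π)
    have e3' : (∑ v, (A (π (c.symm v)) v : ℤ)) ≤ ∑ v, (A (π v) v : ℤ) := by
      have : ((∑ j, A ((c.symm.trans π) j) j : ℕ) : ℤ) ≤ ((∑ j, A (π j) j : ℕ) : ℤ) :=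
        Int.ofNat_le.mpr e3
      simpa [Equiv.trans_apply] using this
    calc ∑ v, w v (c v)
        = ∑ v, (A (π v) (c v) : ℤ) - ∑ v, (A (π (c v)) (c v) : ℤ) := by
          rw [← Finset.sum_sub_distrib]
      _ = ∑ v, (A (π (c.symm v)) v : ℤ) - ∑ v, (A (π v) v : ℤ) := by rw [e1, e2]
      _ ≤ 0 := by linarith
  obtain ⟨p, hp⟩ := JacobiAux.exists_potential w hww hperm
  set m := Finset.univ.inf' Finset.univ_nonempty p with hm
  set lam0 : Fin n → ℕ := fun i => (p (π.symm i) - m).toNat with hlam0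
  have hlam0' : ∀ i, (lam0 i : ℤ) = p (π.symm i) - m := by
    intro i
    simp only [hlam0]
    exact Int.toNat_of_nonneg (sub_nonneg.mpr (Finset.inf'_le _ (Finset.mem_univ _)))
  have hcanon0 : IsCanon A lam0 := by
    refine ⟨π, fun i j => ?_⟩
    have key := hp (π.symm i) j
    have hwij : w (π.symm i) j = (A i j : ℤ) - (A (π j) j : ℤ) := by
      simp [hw]
    have hZ : (A i j : ℤ) + (lam0 i : ℤ) ≤ (A (π j) j : ℤ) + (lam0 (π j) : ℤ) := by
      rw [hlam0' i, hlam0' (π j), Equiv.symm_apply_apply]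
      rw [hwij] at key
      linarith
    exact_mod_cast hZ
  have crit : ∀ lam, IsCanon A lam → ∀ i j, A i j + lam i ≤ A (π j) j + lam (π j) := by
    rintro lam ⟨σ, hσ⟩ i j
    have h1 : ∀ j' : Fin n, A (π j') j' + lam (π j') ≤ A (σ j') j' + lam (σ j') :=
      fun j' => hσ (π j') j'
    have hsum : ∑ j', (A (σ j') j' + lam (σ j')) ≤ ∑ j', (A (π j') j' + lam (π j')) := by
      rw [Finset.sum_add_distrib, Finset.sum_add_distrib,
        Equiv.sum_comp σ lam, Equiv.sum_comp π lam]
      exact Nat.add_le_add_right (hπ' σ) _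
    have heqsum : ∑ j', (A (π j') j' + lam (π j')) = ∑ j', (A (σ j') j' + lam (σ j')) :=
      le_antisymm (Finset.sum_le_sum fun j' _ => h1 j') hsum
    have heq := (Finset.sum_eq_sum_iff_of_le fun j' _ => h1 j').mp heqsum
    calc A i j + lam i ≤ A (σ j) j + lam (σ j) := hσ i j
      _ = A (π j) j + lam (π j) := (heq j (Finset.mem_univ j)).symm
  set S : Fin n → Set ℕ := fun i => {v | ∃ lam, IsCanon A lam ∧ lam i = v} with hS
  set ℓ : Fin n → ℕ := fun i => sInf (S i) with hℓ
  have hSne : ∀ i, (S i).Nonempty := fun i => ⟨lam0 i, lam0, hcanon0, rfl⟩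
  have hmem : ∀ i, ℓ i ∈ S i := fun i => Nat.sInf_mem (hSne i)
  have hmin : ∀ lam, IsCanon A lam → ∀ i, ℓ i ≤ lam i :=
    fun lam hlam i => Nat.sInf_le ⟨lam, hlam, rfl⟩
  refine ⟨ℓ, ⟨π, fun i j => ?_⟩, hmin⟩
  obtain ⟨μ, hμ, hμval⟩ := hmem (π j)
  calc A i j + ℓ i ≤ A i j + μ i := Nat.add_le_add_left (hmin μ hμ i) _
    _ ≤ A (π j) j + μ (π j) := crit μ hμ i j
    _ = A (π j) j + ℓ (π j) := by rw [hμval]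
end

section
/- Let R be a commutative ring, let P be an n×n matrix with entries in R[X], and let α, β : Fin n → ℕ be such that the degree of P(i,j) is at most α(i) + β(j) for all i,j. Then the coefficient of X^(Σ_i α(i) + Σ_j β(j)) in det P equals the determinant of the n×n matrix over R whose (i,j)-entry is the coefficient of X^(α(i)+β(j)) in P(i,j) (the truncated Jacobian matrix). -/
open Polynomial Finset

lemma coeff_prod_sum_of_natDegree_le {R : Type*} [CommRing R] {ι : Type*}
    (s : Finset ι) (f : ι → R[X]) (d : ι → ℕ)
    (h : ∀ i ∈ s, (f i).natDegree ≤ d i) :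
    (∏ i ∈ s, f i).coeff (∑ i ∈ s, d i) = ∏ i ∈ s, (f i).coeff (d i) := by
  induction s using Finset.cons_induction with
  | empty => simp
  | cons a s ha ih =>
    rw [Finset.prod_cons, Finset.sum_cons,
      Polynomial.coeff_mul_add_eq_of_natDegree_le (h a (Finset.mem_cons_self a s))
        ((Polynomial.natDegree_prod_le _ _).trans
          (Finset.sum_le_sum fun i hi => h i (Finset.mem_cons_of_mem hi))),
      ih fun i hi => h i (Finset.mem_cons_of_mem hi), Finset.prod_cons]

/-- if `deg (P i j) ≤ α i + β j` for all `i j`, then the coefficient of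
`X ^ (∑ α + ∑ β)` in `det P` is the determinant of the truncated matrix
`(coeff (P i j) (α i + β j))`. -/
theorem coeff_det_eq_det_truncated {R : Type*} [CommRing R] (n : ℕ)
    (P : Matrix (Fin n) (Fin n) (Polynomial R)) (α β : Fin n → ℕ)
    (hdeg : ∀ i j, (P i j).degree ≤ ((α i + β j : ℕ) : WithBot ℕ)) :
    P.det.coeff ((∑ i, α i) + ∑ j, β j) =
      Matrix.det (fun i j => (P i j).coeff (α i + β j)) := by
  rw [Matrix.det_apply, show (Matrix.det fun i j => (P i j).coeff (α i + β j)) =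
      ∑ σ : Equiv.Perm (Fin n), Equiv.Perm.sign σ • ∏ i, (P (σ i) i).coeff (α (σ i) + β i) from
      Matrix.det_apply _, Polynomial.finset_sum_coeff]
  refine Finset.sum_congr rfl fun σ _ => ?_
  rw [Polynomial.coeff_smul]
  congr 1
  have hN : (∑ i, α i) + ∑ j, β j = ∑ i, (α (σ i) + β i) := by
    rw [Finset.sum_add_distrib, Equiv.sum_comp σ α]
  rw [hN,
    coeff_prod_sum_of_natDegree_le _ _ _
      (fun i _ => Polynomial.natDegree_le_iff_degree_le.mpr (hdeg (σ i) i))]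
end

section
/- Let K be a field (or an integral domain), let P be an n×n matrix with entries in K[X], and let α, β : Fin n → ℕ be such that the degree of P(i,j) is at most α(i) + β(j) for all i,j. If the determinant of the truncated matrix ( coeff(P(i,j), α(i)+β(j)) )_{i,j} is nonzero, then the degree of det P is exactly Σ_i α(i) + Σ_j β(j). -/
open Polynomial Finset

lemma coeff_prod_of_degree_le' {R : Type*} [CommSemiring R] {ι : Type*} (s : Finset ι)
    (f : ι → R[X]) (d : ι → ℕ) (h : ∀ i ∈ s, (f i).natDegree ≤ d i) :
    (∏ i ∈ s, f i).coeff (∑ i ∈ s, d i) = ∏ i ∈ s, (f i).coeff (d i) := by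
  classical
  induction s using Finset.induction with
  | empty => simp
  | insert _ _ hx ih =>
    rename_i a s
    rw [Finset.prod_insert hx, Finset.prod_insert hx, Finset.sum_insert hx,
      Polynomial.coeff_mul_add_eq_of_natDegree_le (h a (Finset.mem_insert_self a s))
        ((Polynomial.natDegree_prod_le s f).trans
          (Finset.sum_le_sum fun i hi => h i (Finset.mem_insert_of_mem hi))),
      ih fun i hi => h i (Finset.mem_insert_of_mem hi)]

set_option maxHeartbeats 1000000 in
/-- over a field, if `deg (P i j) ≤ α i + β j` for all `i j` and the
determinant of the truncated matrix `(coeff (P i j) (α i + β j))` is nonzero, then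
`deg (det P) = ∑ α + ∑ β` exactly. -/
theorem degree_det_eq_of_truncated_det_ne_zero {K : Type*} [Field K] (n : ℕ)
    (P : Matrix (Fin n) (Fin n) (Polynomial K)) (α β : Fin n → ℕ)
    (hdeg : ∀ i j, (P i j).degree ≤ ((α i + β j : ℕ) : WithBot ℕ))
    (htrunc : Matrix.det (fun i j => (P i j).coeff (α i + β j)) ≠ 0) :
    P.det.degree = (((∑ i, α i) + ∑ j, β j : ℕ) : WithBot ℕ) := by
  classical
  set N : ℕ := (∑ i, α i) + ∑ j, β j with hN
  have hnat : ∀ i j, (P i j).natDegree ≤ α i + β j := fun i j =>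
    Polynomial.natDegree_le_iff_degree_le.mpr (hdeg i j)
  have hsum : ∀ σ : Equiv.Perm (Fin n), ∑ i, (α (σ i) + β i) = N := by
    intro σ
    rw [Finset.sum_add_distrib, Equiv.sum_comp σ α]
  -- coefficient of det P at N equals det of the truncated matrix
  have hcoeff : P.det.coeff N = Matrix.det (fun i j => (P i j).coeff (α i + β j)) := by
    rw [Matrix.det_apply', Matrix.det_apply' (M := (fun i j => (P i j).coeff (α i + β j) : Matrix (Fin n) (Fin n) K)), Polynomial.finset_sum_coeff]
    refine Finset.sum_congr rfl fun σ _ => ?_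
    rw [Polynomial.coeff_intCast_mul, ← hsum σ,
      coeff_prod_of_degree_le' Finset.univ (fun i => P (σ i) i) (fun i => α (σ i) + β i)
        (fun i _ => hnat (σ i) i)]
  have hle : P.det.degree ≤ (N : WithBot ℕ) := by
    rw [Matrix.det_apply']
    refine (Polynomial.degree_sum_le _ _).trans ?_
    refine Finset.sup_le fun σ _ => ?_
    refine (Polynomial.degree_mul_le _ _).trans ?_
    rw [← zero_add (N : WithBot ℕ)]
    refine add_le_add (Polynomial.degree_intCast_le _) ?_
    refine (Polynomial.degree_prod_le _ _).trans ?_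
    calc ∑ i, (P (σ i) i).degree ≤ ∑ i, ((α (σ i) + β i : ℕ) : WithBot ℕ) :=
          Finset.sum_le_sum fun i _ => hdeg (σ i) i
      _ = ((∑ i, (α (σ i) + β i) : ℕ) : WithBot ℕ) := by push_cast; rfl
      _ = (N : WithBot ℕ) := by rw [hsum σ]
  have hge : (N : WithBot ℕ) ≤ P.det.degree :=
    Polynomial.le_degree_of_ne_zero (hcoeff ▸ htrunc)
  exact le_antisymm hle hge
end

section
/- Let A be a 2×2 matrix of natural numbers. Define r(j) = max_i A(i,j) for each column j, η(i) = min_j ( r(j) − A(i,j) ) for each row i (a natural number, since A(i,j) ≤ r(j)), and the Greenspan number G(A) = ( Σ_j r(j) ) − max_i η(i) (the subtraction is exact since max_i η(i) ≤ Σ_j r(j)). Then G(A) = J(A), where J(A) = max( A(0,0)+A(1,1), A(0,1)+A(1,0) ) is the Jacobi number of A. -/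
lemma sup2 (f : Fin 2 → ℕ) : Finset.univ.sup f = max (f 0) (f 1) := by
  rw [show (Finset.univ : Finset (Fin 2)) = {0, 1} from rfl]
  simp [Finset.sup_insert, max_def]

lemma inf2 (f : Fin 2 → ℕ) :
    Finset.univ.inf' Finset.univ_nonempty f = min (f 0) (f 1) := by
  apply le_antisymm
  · exact le_min (Finset.inf'_le f (Finset.mem_univ 0)) (Finset.inf'_le f (Finset.mem_univ 1))
  · apply Finset.le_inf'
    intro i _
    fin_cases i
    · exact min_le_left _ _
    · exact min_le_right _ _

/-- for a 2×2 matrix of naturals, the Greenspan number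
`G(A) = (∑ j, r j) - max_i η i`, with `r j = max_i A i j` and
`η i = min_j (r j - A i j)`, equals the Jacobi number
`J(A) = max (A 0 0 + A 1 1) (A 0 1 + A 1 0)`. -/
theorem greenspan_eq_jacobi_two (A : Matrix (Fin 2) (Fin 2) ℕ)
    (r : Fin 2 → ℕ) (hr : ∀ j, r j = Finset.univ.sup fun i => A i j)
    (η : Fin 2 → ℕ)
    (hη : ∀ i, η i = Finset.univ.inf' Finset.univ_nonempty fun j => r j - A i j)
    (G : ℕ) (hG : G = (∑ j, r j) - Finset.univ.sup η) :
    G = max (A 0 0 + A 1 1) (A 0 1 + A 1 0) := by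
  have hr0 := hr 0; have hr1 := hr 1
  rw [sup2] at hr0 hr1
  have hη0 := hη 0; have hη1 := hη 1
  rw [inf2] at hη0 hη1
  rw [sup2, Fin.sum_univ_two] at hG
  omega
end
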